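/- (Proposition 1.) Assume case 1: α_{f,β} := F_f(y*_{f,β}−1) < β < γ_{f,β} := F_f(y*_{f,β}), set κ_{f,β} = min{D_KL(β||α_{f,β}), D_KL(β||γ_{f,β})} > 0 (with D_KL(β||0) = +∞ if α_{f,β} = 0), and let τ_{f,β} be a positive integer such that for every t ≥ τ_{f,β} + 1 both t²·exp(−κ_{f,β}·(t−1)) < 1/2 and (t+1)²·exp(−κ_{f,β}·t) < exp(−κ_{f,β}/2)·t²·exp(−κ_{f,β}·(t−1)). Then for every T ≥ 1, R^{T1}_f(y) ≤ (h·d̄ + b·d̄)·(τ_{f,β} + 1/(2·(1 − exp(−κ_{f,β}/2)))). -/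

import Mathlib

open Finset

noncomputable section

/-- `f` is a demand distribution on `{0, 1, ..., dbar}`. -/
def IsDist (dbar : ℕ) (f : ℕ → ℝ) : Prop :=
  (∀ d, 0 ≤ f d) ∧ (∀ d, dbar < d → f d = 0) ∧ ∑ d ∈ Finset.range (dbar + 1), f d = 1

/-- The cdf `F_f(d) = Σ_{d'=0}^{d} f(d')`. -/
def cdf (f : ℕ → ℝ) (d : ℕ) : ℝ := ∑ i ∈ Finset.range (d + 1), f i

/-- `F_f(d-1)`, with the convention `F_f(-1) = 0`. -/
def cdfm1 (f : ℕ → ℝ) (d : ℕ) : ℝ := ∑ i ∈ Finset.range d, f i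

/-- The one-period expected cost under order-up-to level `y`. -/
def Q (h b : ℝ) (dbar : ℕ) (f : ℕ → ℝ) (y : ℕ) : ℝ :=
  ∑ d ∈ Finset.range (dbar + 1),
    f d * (h * max ((y : ℝ) - (d : ℝ)) 0 + b * max ((d : ℝ) - (y : ℝ)) 0)

/-- The minimum one-period expected cost. -/
def Qstar (h b : ℝ) (dbar : ℕ) (f : ℕ → ℝ) : ℝ :=
  (Finset.range (dbar + 1)).inf' Finset.nonempty_range_add_one (Q h b dbar f)

/-- The newsvendor quantile `y*_{f,β} = min {d ∈ {0,...,dbar} | F_f(d) ≥ β}`. -/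
def ystar (dbar : ℕ) (β : ℝ) (f : ℕ → ℝ) : ℕ :=
  sInf {d : ℕ | d ≤ dbar ∧ β ≤ cdf f d}

/-- The empirical distribution of `n` observations. -/
def emp (n : ℕ) (d : Fin n → ℕ) (k : ℕ) : ℝ :=
  (∑ s : Fin n, if d s = k then (1 : ℝ) else 0) / n

/-- The empirical newsvendor quantile `ŷ_{n+1}` computed from `n` observations. -/
def yhat (dbar : ℕ) (β : ℝ) (n : ℕ) (d : Fin n → ℕ) : ℕ := ystar dbar β (emp n d)

/-- The order-up-to level of period `n+1` of the newsvendor-based policy, given the demands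
of periods `1,...,n`:  `y_1 = ŷ_1 = 0` and `y_t = max (ŷ_t) (y_{t-1} - d_{t-1})`. -/
def pol (dbar : ℕ) (β : ℝ) : (n : ℕ) → (Fin n → ℕ) → ℕ
  | 0, _ => 0
  | n + 1, d =>
      max (yhat dbar β (n + 1) d) (pol dbar β n (fun s => d s.castSucc) - d (Fin.last n))

/-- The expectation `E_f[g(D_1,...,D_n)]` under i.i.d. draws from `f`. -/
def expec (dbar n : ℕ) (f : ℕ → ℝ) (g : (Fin n → ℕ) → ℝ) : ℝ :=
  ∑ d : Fin n → Fin (dbar + 1), (∏ s : Fin n, f (d s)) * g (fun s => (d s : ℕ))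

open scoped Classical in
/-- The probability `P_f[(D_1,...,D_n) ∈ E]` under i.i.d. draws from `f`. -/
def prob (dbar n : ℕ) (f : ℕ → ℝ) (E : (Fin n → ℕ) → Prop) : ℝ :=
  ∑ d : Fin n → Fin (dbar + 1), if E (fun s => (d s : ℕ)) then ∏ s : Fin n, f (d s) else 0

/-- `R^{T1}_f(y) = Σ_{t=1}^{T} E_f[Q_f(ŷ_t)] − T·Q*_f`. -/
def regretT1 (h b : ℝ) (dbar : ℕ) (β : ℝ) (f : ℕ → ℝ) (T : ℕ) : ℝ :=
  ∑ t ∈ Finset.range T, expec dbar t f (fun d => Q h b dbar f (yhat dbar β t d))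
    - (T : ℝ) * Qstar h b dbar f

/-- `R^{T2}_f(y) = Σ_{t=3}^{T} E_f[Q_f(y_t) − Q_f(ŷ_t)]` (the index `n = t - 1` below). -/
def regretT2 (h b : ℝ) (dbar : ℕ) (β : ℝ) (f : ℕ → ℝ) (T : ℕ) : ℝ :=
  ∑ n ∈ Finset.Ico 2 T,
    expec dbar n f (fun d => Q h b dbar f (pol dbar β n d) - Q h b dbar f (yhat dbar β n d))

/-- The `T`-period regret `R^{T}_f(y) = Σ_{t=1}^{T} E_f[Q_f(y_t(D_1,...,D_{t-1}))] − T·Q*_f`. -/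
def regret (h b : ℝ) (dbar : ℕ) (β : ℝ) (f : ℕ → ℝ) (T : ℕ) : ℝ :=
  ∑ t ∈ Finset.range T, expec dbar t f (fun d => Q h b dbar f (pol dbar β t d))
    - (T : ℝ) * Qstar h b dbar f

/-- The binary Kullback–Leibler divergence between Bernoulli distributions `u` and `v`. -/
def klB (u v : ℝ) : ℝ := u * Real.log (u / v) + (1 - u) * Real.log ((1 - u) / (1 - v))

/-- The total variation distance `δ_V(f,g)`. -/
def tvDist (dbar : ℕ) (f g : ℕ → ℝ) : ℝ := (∑ d ∈ Finset.range (dbar + 1), |f d - g d|) / 2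


open scoped Classical
set_option maxHeartbeats 1000000

lemma sum_prod_pow (n m : ℕ) (c : Fin m → ℝ) :
    (∑ k : Fin m, c k) ^ n = ∑ d : Fin n → Fin m, ∏ s : Fin n, c (d s) := by
  rw [← Fin.prod_const n (∑ k : Fin m, c k), Finset.prod_univ_sum]
  rw [Fintype.sum_equiv (Equiv.refl _)]
  · rfl
  · intro x; rfl

lemma expec_prod (dbar n : ℕ) (f : ℕ → ℝ) (g : ℕ → ℝ) :
    expec dbar n f (fun d => ∏ s : Fin n, g (d s))
      = (∑ k ∈ Finset.range (dbar + 1), f k * g k) ^ n := by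
  rw [← Fin.sum_univ_eq_sum_range (fun k => f k * g k) (dbar + 1), sum_prod_pow]
  unfold expec
  refine Finset.sum_congr rfl fun d _ => ?_
  rw [← Finset.prod_mul_distrib]

lemma expec_smul (dbar n : ℕ) (f : ℕ → ℝ) (c : ℝ) (g : (Fin n → ℕ) → ℝ) :
    expec dbar n f (fun d => c * g d) = c * expec dbar n f g := by
  unfold expec; rw [Finset.mul_sum]
  exact Finset.sum_congr rfl fun d _ => by ring

lemma expec_add (dbar n : ℕ) (f : ℕ → ℝ) (g1 g2 : (Fin n → ℕ) → ℝ) :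
    expec dbar n f (fun d => g1 d + g2 d) = expec dbar n f g1 + expec dbar n f g2 := by
  unfold expec; rw [← Finset.sum_add_distrib]
  exact Finset.sum_congr rfl fun d _ => by ring

lemma expec_const (dbar n : ℕ) (f : ℕ → ℝ) (hf : IsDist dbar f) (c : ℝ) :
    expec dbar n f (fun _ => c) = c := by
  have h1 : expec dbar n f (fun _ => (1:ℝ)) = 1 := by
    have := expec_prod dbar n f (fun _ => (1:ℝ))
    simp only [Finset.prod_const_one, mul_one] at this
    rw [this, hf.2.2, one_pow]
  have h2 : expec dbar n f (fun _ => c) = c * expec dbar n f (fun _ => (1:ℝ)) := by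
    rw [← expec_smul]; simp
  rw [h2, h1, mul_one]
  
lemma expec_sub_const (dbar n : ℕ) (f : ℕ → ℝ) (hf : IsDist dbar f) (c : ℝ)
    (g : (Fin n → ℕ) → ℝ) :
    expec dbar n f (fun d => g d - c) = expec dbar n f g - c := by
  have : (fun d : Fin n → ℕ => g d - c) = fun d => g d + (-c) := by funext d; ring
  rw [this, expec_add, expec_const dbar n f hf]; ring

lemma expec_mono (dbar n : ℕ) (f : ℕ → ℝ) (hf0 : ∀ k, 0 ≤ f k)
    (g1 g2 : (Fin n → ℕ) → ℝ)
    (h : ∀ d : Fin n → Fin (dbar + 1), g1 (fun s => (d s : ℕ)) ≤ g2 (fun s => (d s : ℕ))) :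
    expec dbar n f g1 ≤ expec dbar n f g2 := by
  refine Finset.sum_le_sum fun d _ => ?_
  exact mul_le_mul_of_nonneg_left (h d) (Finset.prod_nonneg fun s _ => hf0 _)

lemma expec_ind (dbar n : ℕ) (f : ℕ → ℝ) (c : ℝ) (E : (Fin n → ℕ) → Prop) :
    expec dbar n f (fun d => if E d then c else 0) = c * prob dbar n f E := by
  unfold expec prob
  rw [Finset.mul_sum]
  refine Finset.sum_congr rfl fun d _ => ?_
  by_cases hE : E (fun s => (d s : ℕ)) <;> simp [hE, mul_comm]

lemma prob_nonneg (dbar n : ℕ) (f : ℕ → ℝ) (hf0 : ∀ k, 0 ≤ f k)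
    (E : (Fin n → ℕ) → Prop) : 0 ≤ prob dbar n f E := by
  refine Finset.sum_nonneg fun d _ => ?_
  split_ifs
  · exact Finset.prod_nonneg fun s _ => hf0 _
  · exact le_refl 0


lemma chernoff_core (dbar n : ℕ) (f : ℕ → ℝ) (hf : IsDist dbar f)
    (g : ℕ → Prop) [DecidablePred g] (p lam c : ℝ)
    (hp : (∑ k ∈ Finset.range (dbar + 1), if g k then f k else 0) = p)
    (E : (Fin n → ℕ) → Prop)
    (hE : ∀ d : Fin n → Fin (dbar + 1), E (fun s => (d s : ℕ)) →
      0 ≤ lam * ((∑ s : Fin n, if g ((d s : ℕ)) then (1:ℝ) else 0) - c)) :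
    prob dbar n f E ≤ Real.exp (-(lam * c)) * (p * Real.exp lam + (1 - p)) ^ n := by
  have key : ∀ d : Fin n → ℕ,
      Real.exp (lam * ((∑ s : Fin n, if g (d s) then (1:ℝ) else 0) - c))
      = Real.exp (-(lam * c)) * ∏ s : Fin n, Real.exp (lam * (if g (d s) then (1:ℝ) else 0)) := by
    intro d
    rw [← Real.exp_sum, ← Real.exp_add]
    congr 1
    rw [← Finset.mul_sum]
    ring
  have step1 : prob dbar n f E ≤ expec dbar n f
      (fun d => Real.exp (lam * ((∑ s : Fin n, if g (d s) then (1:ℝ) else 0) - c))) := by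
    refine Finset.sum_le_sum fun d _ => ?_
    have hprod : 0 ≤ ∏ s : Fin n, f ((d s : ℕ)) := Finset.prod_nonneg fun s _ => hf.1 _
    split_ifs with hEd
    · have h1 : (1:ℝ) ≤ Real.exp (lam * ((∑ s : Fin n, if g ((d s : ℕ)) then (1:ℝ) else 0) - c)) :=
        Real.one_le_exp (hE d hEd)
      calc (∏ s : Fin n, f ((d s : ℕ))) = (∏ s : Fin n, f ((d s : ℕ))) * 1 := by ring
        _ ≤ _ := mul_le_mul_of_nonneg_left h1 hprod
    · exact mul_nonneg hprod (le_of_lt (Real.exp_pos _))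
  have step2 : expec dbar n f
      (fun d => Real.exp (lam * ((∑ s : Fin n, if g (d s) then (1:ℝ) else 0) - c)))
      = Real.exp (-(lam * c)) * (p * Real.exp lam + (1 - p)) ^ n := by
    have e1 : expec dbar n f
        (fun d => Real.exp (lam * ((∑ s : Fin n, if g (d s) then (1:ℝ) else 0) - c)))
        = expec dbar n f (fun d => Real.exp (-(lam * c)) *
            ∏ s : Fin n, Real.exp (lam * (if g (d s) then (1:ℝ) else 0))) := by
      unfold expec
      exact Finset.sum_congr rfl fun d _ => by dsimp only; rw [key]
    rw [e1, expec_smul,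
      expec_prod dbar n f (fun k => Real.exp (lam * (if g k then (1:ℝ) else 0)))]
    congr 2
    have hone : ∀ k, f k * Real.exp (lam * (if g k then (1:ℝ) else 0))
        = (if g k then f k else 0) * Real.exp lam + (if g k then 0 else f k) := by
      intro k; split_ifs <;> simp
    rw [Finset.sum_congr rfl (fun k _ => hone k), Finset.sum_add_distrib, ← Finset.sum_mul, hp]
    congr 1
    have hsplit : (∑ k ∈ Finset.range (dbar + 1), if g k then f k else 0)
        + (∑ k ∈ Finset.range (dbar + 1), if g k then 0 else f k)
        = ∑ k ∈ Finset.range (dbar + 1), f k := by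
      rw [← Finset.sum_add_distrib]
      refine Finset.sum_congr rfl fun k _ => ?_
      split_ifs <;> ring
    rw [hf.2.2, hp] at hsplit
    linarith
  linarith

lemma kl_opt (p βv : ℝ) (hp0 : 0 < p) (hp1 : p < 1) (hb0 : 0 < βv) (hb1 : βv < 1) :
    Real.exp (-(Real.log (βv * (1 - p) / ((1 - βv) * p)) * βv)) *
      (p * Real.exp (Real.log (βv * (1 - p) / ((1 - βv) * p))) + (1 - p))
      = Real.exp (-klB βv p) := by
  have h1p : (0:ℝ) < 1 - p := by linarith
  have h1b : (0:ℝ) < 1 - βv := by linarith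
  have hratio : (0:ℝ) < βv * (1 - p) / ((1 - βv) * p) :=
    div_pos (mul_pos hb0 h1p) (mul_pos h1b hp0)
  rw [Real.exp_log hratio]
  have h2 : p * (βv * (1 - p) / ((1 - βv) * p)) + (1 - p) = (1 - p) / (1 - βv) := by
    field_simp; ring
  rw [h2]
  have h3 : (1 - p) / (1 - βv) = Real.exp (Real.log ((1 - p) / (1 - βv))) := by
    rw [Real.exp_log (div_pos h1p h1b)]
  rw [h3, ← Real.exp_add]
  congr 1
  have hL : Real.log (βv * (1 - p) / ((1 - βv) * p))
      = Real.log βv + Real.log (1 - p) - (Real.log (1 - βv) + Real.log p) := by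
    rw [Real.log_div (by positivity) (by positivity), Real.log_mul hb0.ne' h1p.ne',
      Real.log_mul h1b.ne' hp0.ne']
  have hl2 : Real.log ((1 - p) / (1 - βv)) = Real.log (1 - p) - Real.log (1 - βv) :=
    Real.log_div h1p.ne' h1b.ne'
  have hk : klB βv p = βv * (Real.log βv - Real.log p)
      + (1 - βv) * (Real.log (1 - βv) - Real.log (1 - p)) := by
    unfold klB
    rw [Real.log_div hb0.ne' hp0.ne', Real.log_div h1b.ne' h1p.ne']
  rw [hL, hl2, hk]
  ring


lemma cdf_mono (f : ℕ → ℝ) (hf0 : ∀ k, 0 ≤ f k) {i j : ℕ} (hij : i ≤ j) :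
    cdf f i ≤ cdf f j :=
  Finset.sum_le_sum_of_subset_of_nonneg
    (Finset.range_subset_range.mpr (by omega)) (fun k _ _ => hf0 k)

lemma sum_ite_lt (dbar : ℕ) (f : ℕ → ℝ) (y : ℕ) (hy : y ≤ dbar + 1) :
    (∑ k ∈ Finset.range (dbar + 1), if k < y then f k else 0) = cdfm1 f y := by
  unfold cdfm1
  rw [← Finset.sum_subset (Finset.range_subset_range.mpr hy)
    (fun k _ hk => if_neg (by simpa using hk))]
  exact Finset.sum_congr rfl fun k hk => if_pos (Finset.mem_range.mp hk)

lemma sum_ite_le (dbar : ℕ) (f : ℕ → ℝ) (y : ℕ) (hy : y ≤ dbar) :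
    (∑ k ∈ Finset.range (dbar + 1), if k ≤ y then f k else 0) = cdf f y := by
  have : ∀ k, (if k ≤ y then f k else 0) = (if k < y + 1 then f k else 0) := by
    intro k; simp [Nat.lt_succ_iff]
  rw [Finset.sum_congr rfl fun k _ => this k, sum_ite_lt dbar f (y + 1) (by omega)]
  rfl

lemma ystar_mem (dbar : ℕ) (β : ℝ) (f : ℕ → ℝ) (hβ : β ≤ cdf f dbar) :
    ystar dbar β f ≤ dbar ∧ β ≤ cdf f (ystar dbar β f) :=
  Nat.sInf_mem (⟨dbar, le_rfl, hβ⟩ : Set.Nonempty {d : ℕ | d ≤ dbar ∧ β ≤ cdf f d})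

lemma ystar_lt (dbar : ℕ) (β : ℝ) (f : ℕ → ℝ) (k : ℕ) (hk : k < ystar dbar β f)
    (hkd : k ≤ dbar) : cdf f k < β := by
  have h := Nat.notMem_of_lt_sInf hk
  simp only [Set.mem_setOf_eq, not_and, not_le] at h
  exact h hkd

lemma cdf_emp (n : ℕ) (d : Fin n → ℕ) (k : ℕ) :
    cdf (emp n d) k = (∑ s : Fin n, if d s ≤ k then (1 : ℝ) else 0) / n := by
  unfold cdf emp
  rw [← Finset.sum_div]
  congr 1
  rw [Finset.sum_comm]
  refine Finset.sum_congr rfl fun s _ => ?_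
  rw [Finset.sum_ite_eq (Finset.range (k + 1)) (d s) (fun _ => (1:ℝ))]
  simp [Nat.lt_succ_iff]

lemma yhat_le (dbar : ℕ) (β : ℝ) (n : ℕ) (d : Fin n → ℕ) : yhat dbar β n d ≤ dbar := by
  unfold yhat ystar
  rcases Set.eq_empty_or_nonempty {m : ℕ | m ≤ dbar ∧ β ≤ cdf (emp n d) m} with he | hne
  · rw [he, Nat.sInf_empty]; exact Nat.zero_le _
  · exact (Nat.sInf_mem hne).1

lemma yhat_eq (dbar : ℕ) (β : ℝ) (f : ℕ → ℝ) (hβ : β ≤ cdf f dbar) (n : ℕ) (hn : 0 < n)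
    (d : Fin n → ℕ)
    (h1 : (∑ s : Fin n, if d s < ystar dbar β f then (1:ℝ) else 0) < β * n)
    (h2 : β * n ≤ ∑ s : Fin n, if d s ≤ ystar dbar β f then (1:ℝ) else 0) :
    yhat dbar β n d = ystar dbar β f := by
  have hnpos : (0:ℝ) < n := by exact_mod_cast hn
  have hydbar : ystar dbar β f ≤ dbar := (ystar_mem dbar β f hβ).1
  have hmem : ystar dbar β f ∈ {m : ℕ | m ≤ dbar ∧ β ≤ cdf (emp n d) m} := by
    refine ⟨hydbar, ?_⟩
    rw [cdf_emp, le_div_iff₀ hnpos]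
    exact h2
  unfold yhat ystar
  refine le_antisymm (Nat.sInf_le hmem) ?_
  by_contra hlt
  push_neg at hlt
  have hmem2 := Nat.sInf_mem (⟨_, hmem⟩ :
    Set.Nonempty {m : ℕ | m ≤ dbar ∧ β ≤ cdf (emp n d) m})
  have hcdf : cdf (emp n d) (sInf {m : ℕ | m ≤ dbar ∧ β ≤ cdf (emp n d) m}) < β := by
    rw [cdf_emp, div_lt_iff₀ hnpos]
    calc (∑ s : Fin n, if d s ≤ sInf {m : ℕ | m ≤ dbar ∧ β ≤ cdf (emp n d) m}
            then (1:ℝ) else 0)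
        ≤ ∑ s : Fin n, if d s < ystar dbar β f then (1:ℝ) else 0 := by
          refine Finset.sum_le_sum fun s _ => ?_
          split_ifs with ha hb
          · exact le_refl 1
          · exact absurd (lt_of_le_of_lt ha hlt) hb
          · norm_num
          · exact le_refl 0
      _ < β * n := h1
  exact absurd hmem2.2 (not_le.mpr hcdf)

lemma Q_nonneg (h b : ℝ) (hh : 0 ≤ h) (hb : 0 ≤ b) (dbar : ℕ) (f : ℕ → ℝ)
    (hf0 : ∀ k, 0 ≤ f k) (y : ℕ) : 0 ≤ Q h b dbar f y := by
  refine Finset.sum_nonneg fun k _ => mul_nonneg (hf0 k) ?_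
  have := le_max_right ((y:ℝ) - k) 0
  have := le_max_right ((k:ℝ) - y) 0
  positivity

lemma Qstar_nonneg (h b : ℝ) (hh : 0 ≤ h) (hb : 0 ≤ b) (dbar : ℕ) (f : ℕ → ℝ)
    (hf0 : ∀ k, 0 ≤ f k) : 0 ≤ Qstar h b dbar f :=
  Finset.le_inf' _ _ fun k _ => Q_nonneg h b hh hb dbar f hf0 k

lemma Q_le (h b : ℝ) (hh : 0 ≤ h) (hb : 0 ≤ b) (dbar : ℕ) (f : ℕ → ℝ)
    (hf : IsDist dbar f) (y : ℕ) (hy : y ≤ dbar) :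
    Q h b dbar f y ≤ h * dbar + b * dbar := by
  have : Q h b dbar f y ≤ ∑ k ∈ Finset.range (dbar + 1), f k * (h * dbar + b * dbar) := by
    refine Finset.sum_le_sum fun k hk => mul_le_mul_of_nonneg_left ?_ (hf.1 k)
    have hkd : (k : ℝ) ≤ dbar := by
      exact_mod_cast Nat.lt_succ_iff.mp (Finset.mem_range.mp hk)
    have hyd : (y : ℝ) ≤ dbar := by exact_mod_cast hy
    have hk0 : (0:ℝ) ≤ k := Nat.cast_nonneg k
    have hy0 : (0:ℝ) ≤ y := Nat.cast_nonneg y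
    have hd0 : (0:ℝ) ≤ dbar := Nat.cast_nonneg dbar
    have m1 : max ((y:ℝ) - k) 0 ≤ dbar := max_le (by linarith) hd0
    have m2 : max ((k:ℝ) - y) 0 ≤ dbar := max_le (by linarith) hd0
    have := mul_le_mul_of_nonneg_left m1 hh
    have := mul_le_mul_of_nonneg_left m2 hb
    linarith
  rw [← Finset.sum_mul, hf.2.2, one_mul] at this
  exact this

lemma Q_diff (h b : ℝ) (dbar : ℕ) (f : ℕ → ℝ) (y : ℕ) :
    Q h b dbar f (y + 1) - Q h b dbar f y
      = ∑ k ∈ Finset.range (dbar + 1), f k * (if k ≤ y then h else -b) := by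
  unfold Q
  rw [← Finset.sum_sub_distrib]
  refine Finset.sum_congr rfl fun k _ => ?_
  by_cases hk : k ≤ y
  · have hky : (k : ℝ) ≤ y := by exact_mod_cast hk
    rw [if_pos hk]
    push_cast
    rw [max_eq_left (by linarith : (0:ℝ) ≤ (y:ℝ) + 1 - k),
      max_eq_left (by linarith : (0:ℝ) ≤ (y:ℝ) - k),
      max_eq_right (by linarith : (k:ℝ) - ((y:ℝ) + 1) ≤ 0),
      max_eq_right (by linarith : (k:ℝ) - y ≤ 0)]
    ring
  · have hky : (y : ℝ) + 1 ≤ k := by exact_mod_cast Nat.succ_le_of_lt (Nat.lt_of_not_le hk)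
    rw [if_neg hk]
    push_cast
    rw [max_eq_right (by linarith : (y:ℝ) + 1 - k ≤ 0),
      max_eq_right (by linarith : (y:ℝ) - k ≤ 0),
      max_eq_left (by linarith : (0:ℝ) ≤ (k:ℝ) - ((y:ℝ) + 1)),
      max_eq_left (by linarith : (0:ℝ) ≤ (k:ℝ) - y)]
    ring

lemma Q_diff' (h b : ℝ) (dbar : ℕ) (f : ℕ → ℝ) (hf : IsDist dbar f) (y : ℕ) (hy : y ≤ dbar) :
    Q h b dbar f (y + 1) - Q h b dbar f y = (h + b) * cdf f y - b := by
  rw [Q_diff]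
  have : ∀ k, f k * (if k ≤ y then h else -b)
      = (h + b) * (if k ≤ y then f k else 0) - b * f k := by
    intro k; split_ifs <;> ring
  rw [Finset.sum_congr rfl fun k _ => this k, Finset.sum_sub_distrib, ← Finset.mul_sum,
    ← Finset.mul_sum, sum_ite_le dbar f y hy, hf.2.2, mul_one]

lemma Qstar_eq (h b : ℝ) (hh : 0 < h) (hb : 0 < b) (dbar : ℕ) (f : ℕ → ℝ)
    (hf : IsDist dbar f) (β : ℝ) (hβ : β = b / (h + b)) :
    Qstar h b dbar f = Q h b dbar f (ystar dbar β f) := by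
  have hhb : (0:ℝ) < h + b := by linarith
  have hβb : β * (h + b) = b := by rw [hβ]; field_simp
  have hβ1 : β < 1 := by rw [hβ, div_lt_one hhb]; linarith
  have hcdfd : cdf f dbar = 1 := hf.2.2
  have hβd : β ≤ cdf f dbar := by rw [hcdfd]; linarith
  have hydbar : ystar dbar β f ≤ dbar := (ystar_mem dbar β f hβd).1
  have hyc : β ≤ cdf f (ystar dbar β f) := (ystar_mem dbar β f hβd).2
  have dec : ∀ j k, j ≤ k → k ≤ ystar dbar β f → Q h b dbar f k ≤ Q h b dbar f j := by
    intro j k hjk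
    induction k, hjk using Nat.le_induction with
    | base => intro _; exact le_refl _
    | succ k hjk ih =>
      intro hk1
      have hky : k < ystar dbar β f := hk1
      have hkd : k ≤ dbar := le_trans (Nat.le_of_lt hky) hydbar
      have hcdf : cdf f k < β := ystar_lt dbar β f k hky hkd
      have hdiff := Q_diff' h b dbar f hf k hkd
      have : Q h b dbar f (k + 1) ≤ Q h b dbar f k := by nlinarith
      exact le_trans this (ih (le_trans (Nat.le_succ k) hk1))
  have inc : ∀ k, ystar dbar β f ≤ k → k ≤ dbar →
      Q h b dbar f (ystar dbar β f) ≤ Q h b dbar f k := by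
    intro k hk
    induction k, hk using Nat.le_induction with
    | base => intro _; exact le_refl _
    | succ k hyk ih =>
      intro hk1
      have hkd : k ≤ dbar := by omega
      have hcdf : β ≤ cdf f k := le_trans hyc (cdf_mono f hf.1 hyk)
      have hdiff := Q_diff' h b dbar f hf k hkd
      have : Q h b dbar f k ≤ Q h b dbar f (k + 1) := by nlinarith
      exact le_trans (ih hkd) this
  refine le_antisymm (Finset.inf'_le _ (Finset.mem_range.mpr (Nat.lt_succ_of_le hydbar))) ?_
  refine Finset.le_inf' _ _ fun k hk => ?_
  have hkd : k ≤ dbar := Nat.lt_succ_iff.mp (Finset.mem_range.mp hk)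
  rcases le_total k (ystar dbar β f) with hc | hc
  · exact dec k (ystar dbar β f) hc (le_refl _)
  · exact inc k hc hkd



lemma prob_up (dbar : ℕ) (β : ℝ) (f : ℕ → ℝ) (hf : IsDist dbar f)
    (hβ0 : 0 < β) (hβ1 : β < 1) (hydbar : ystar dbar β f ≤ dbar)
    (hα : cdfm1 f (ystar dbar β f) < β)
    (κ : ℝ) (hκpos : 0 < κ)
    (hκα : cdfm1 f (ystar dbar β f) = 0 ∨ κ ≤ klB β (cdfm1 f (ystar dbar β f)))
    (n : ℕ) (hn : 1 ≤ n) :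
    prob dbar n f (fun d => β * n ≤ ∑ s : Fin n, if d s < ystar dbar β f then (1:ℝ) else 0)
      ≤ Real.exp (-κ * n) := by
  have hnpos : (0:ℝ) < n := by exact_mod_cast hn
  by_cases hα0 : cdfm1 f (ystar dbar β f) = 0
  · have hzero : prob dbar n f
        (fun d => β * n ≤ ∑ s : Fin n, if d s < ystar dbar β f then (1:ℝ) else 0) = 0 := by
      refine Finset.sum_eq_zero fun d _ => ?_
      split_ifs with hEd
      · have hex : ∃ s : Fin n, ((d s : ℕ)) < ystar dbar β f := by
          by_contra hno
          push_neg at hno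
          have : (∑ s : Fin n, if ((d s : ℕ)) < ystar dbar β f then (1:ℝ) else 0) = 0 :=
            Finset.sum_eq_zero fun s _ => if_neg (by exact Nat.not_lt.mpr (hno s))
          dsimp only at hEd
          rw [this] at hEd
          nlinarith
        obtain ⟨s, hs⟩ := hex
        have hfz : f ((d s : ℕ)) = 0 := by
          have := (Finset.sum_eq_zero_iff_of_nonneg
            (fun i _ => hf.1 i)).mp hα0 ((d s : ℕ)) (Finset.mem_range.mpr hs)
          exact this
        exact Finset.prod_eq_zero (Finset.mem_univ s) hfz
      · rfl
    rw [hzero]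
    exact le_of_lt (Real.exp_pos _)
  · have hαnn : 0 ≤ cdfm1 f (ystar dbar β f) := Finset.sum_nonneg fun i _ => hf.1 i
    have hαp : 0 < cdfm1 f (ystar dbar β f) := lt_of_le_of_ne hαnn (Ne.symm hα0)
    have hα1 : cdfm1 f (ystar dbar β f) < 1 := lt_trans hα hβ1
    have hκ2 : κ ≤ klB β (cdfm1 f (ystar dbar β f)) := hκα.resolve_left hα0
    set α := cdfm1 f (ystar dbar β f) with hαdef
    set lam := Real.log (β * (1 - α) / ((1 - β) * α)) with hlamdef
    have h1α : (0:ℝ) < 1 - α := by linarith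
    have h1β : (0:ℝ) < 1 - β := by linarith
    have hlam : 0 ≤ lam := by
      refine Real.log_nonneg ?_
      rw [le_div_iff₀ (mul_pos h1β hαp)]
      nlinarith
    have hp : (∑ k ∈ Finset.range (dbar + 1), if k < ystar dbar β f then f k else 0) = α :=
      sum_ite_lt dbar f (ystar dbar β f) (by omega)
    have hcher := chernoff_core dbar n f hf (fun k => k < ystar dbar β f) α lam (β * n) hp
      (fun d => β * n ≤ ∑ s : Fin n, if d s < ystar dbar β f then (1:ℝ) else 0)
      (fun d hEd => mul_nonneg hlam (by linarith))
    refine le_trans hcher ?_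
    have e1 : -(lam * (β * n)) = (n:ℝ) * (-(lam * β)) := by ring
    rw [e1, Real.exp_nat_mul, ← mul_pow]
    have e2 := kl_opt α β hαp hα1 hβ0 hβ1
    rw [e2]
    rw [← Real.exp_nat_mul]
    apply Real.exp_le_exp.mpr
    have : (0:ℝ) ≤ n := le_of_lt hnpos
    nlinarith

lemma prob_down (dbar : ℕ) (β : ℝ) (f : ℕ → ℝ) (hf : IsDist dbar f)
    (hβ0 : 0 < β) (hβ1 : β < 1) (hydbar : ystar dbar β f ≤ dbar)
    (hγ : β < cdf f (ystar dbar β f))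
    (κ : ℝ) (hκpos : 0 < κ)
    (hκγ : cdf f (ystar dbar β f) = 1 ∨ κ ≤ klB β (cdf f (ystar dbar β f)))
    (n : ℕ) (hn : 1 ≤ n) :
    prob dbar n f (fun d => (∑ s : Fin n, if d s ≤ ystar dbar β f then (1:ℝ) else 0) ≤ β * n)
      ≤ Real.exp (-κ * n) := by
  have hnpos : (0:ℝ) < n := by exact_mod_cast hn
  have htail : cdf f (ystar dbar β f) +
      (∑ k ∈ Finset.Ico (ystar dbar β f + 1) (dbar + 1), f k) = 1 := by
    have hsplit : ∑ k ∈ Finset.range (dbar + 1), f k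
        = (∑ k ∈ Finset.range (ystar dbar β f + 1), f k)
          + ∑ k ∈ Finset.Ico (ystar dbar β f + 1) (dbar + 1), f k := by
      rw [Finset.range_eq_Ico, Finset.range_eq_Ico,
        Finset.sum_Ico_consecutive f (Nat.zero_le (ystar dbar β f + 1)) (by omega : ystar dbar β f + 1 ≤ dbar + 1)]
    rw [← hf.2.2, hsplit]
    rfl
  by_cases hγ1 : cdf f (ystar dbar β f) = 1
  · have hzero : prob dbar n f
        (fun d => (∑ s : Fin n, if d s ≤ ystar dbar β f then (1:ℝ) else 0) ≤ β * n) = 0 := by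
      refine Finset.sum_eq_zero fun d _ => ?_
      split_ifs with hEd
      · have hex : ∃ s : Fin n, ystar dbar β f < ((d s : ℕ)) := by
          by_contra hno
          push_neg at hno
          have : (∑ s : Fin n, if ((d s : ℕ)) ≤ ystar dbar β f then (1:ℝ) else 0) = (n:ℝ) := by
            rw [Finset.sum_congr rfl fun s _ => if_pos (hno s)]
            simp
          dsimp only at hEd
          rw [this] at hEd
          nlinarith
        obtain ⟨s, hs⟩ := hex
        have htz : (∑ k ∈ Finset.Ico (ystar dbar β f + 1) (dbar + 1), f k) = 0 := by
          rw [hγ1] at htail; linarith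
        have hfz : f ((d s : ℕ)) = 0 := by
          refine (Finset.sum_eq_zero_iff_of_nonneg (fun i _ => hf.1 i)).mp htz _ ?_
          exact Finset.mem_Ico.mpr ⟨by omega, by have := (d s).isLt; omega⟩
        exact Finset.prod_eq_zero (Finset.mem_univ s) hfz
      · rfl
    rw [hzero]
    exact le_of_lt (Real.exp_pos _)
  · have hγle : cdf f (ystar dbar β f) ≤ 1 := by
      have : 0 ≤ ∑ k ∈ Finset.Ico (ystar dbar β f + 1) (dbar + 1), f k :=
        Finset.sum_nonneg fun i _ => hf.1 i
      linarith
    have hκ2 : κ ≤ klB β (cdf f (ystar dbar β f)) := hκγ.resolve_left hγ1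
    set γ := cdf f (ystar dbar β f) with hγdef
    have hγp : 0 < γ := lt_trans hβ0 hγ
    have hγ1' : γ < 1 := lt_of_le_of_ne hγle hγ1
    set lam := Real.log (β * (1 - γ) / ((1 - β) * γ)) with hlamdef
    have h1γ : (0:ℝ) < 1 - γ := by linarith
    have h1β : (0:ℝ) < 1 - β := by linarith
    have hlam : lam ≤ 0 := by
      refine Real.log_nonpos (by positivity) ?_
      rw [div_le_one (mul_pos h1β hγp)]
      nlinarith
    have hp : (∑ k ∈ Finset.range (dbar + 1), if k ≤ ystar dbar β f then f k else 0) = γ :=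
      sum_ite_le dbar f (ystar dbar β f) hydbar
    have hcher := chernoff_core dbar n f hf (fun k => k ≤ ystar dbar β f) γ lam (β * n) hp
      (fun d => (∑ s : Fin n, if d s ≤ ystar dbar β f then (1:ℝ) else 0) ≤ β * n)
      (fun d hEd => by nlinarith [hEd])
    refine le_trans hcher ?_
    have e1 : -(lam * (β * n)) = (n:ℝ) * (-(lam * β)) := by ring
    rw [e1, Real.exp_nat_mul, ← mul_pow]
    have e2 := kl_opt γ β hγp hγ1' hβ0 hβ1
    rw [e2]
    rw [← Real.exp_nat_mul]
    apply Real.exp_le_exp.mpr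
    have : (0:ℝ) ≤ n := le_of_lt hnpos
    nlinarith


lemma expec_le_prob2 (dbar n : ℕ) (f : ℕ → ℝ) (hf0 : ∀ k, 0 ≤ f k) (c : ℝ)
    (g : (Fin n → ℕ) → ℝ) (E1 E2 : (Fin n → ℕ) → Prop)
    (hg : ∀ d : Fin n → Fin (dbar + 1),
      g (fun s => (d s : ℕ)) ≤ (if E1 (fun s => (d s : ℕ)) then c else 0)
        + (if E2 (fun s => (d s : ℕ)) then c else 0)) :
    expec dbar n f g ≤ c * prob dbar n f E1 + c * prob dbar n f E2 := by
  unfold expec prob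
  rw [Finset.mul_sum, Finset.mul_sum, ← Finset.sum_add_distrib]
  refine Finset.sum_le_sum fun d _ => ?_
  have hprod : 0 ≤ ∏ s : Fin n, f ((d s : ℕ)) := Finset.prod_nonneg fun s _ => hf0 _
  have hgd := hg d
  by_cases h1 : E1 (fun s => (d s : ℕ)) <;> by_cases h2 : E2 (fun s => (d s : ℕ)) <;>
    simp only [h1, h2, if_true, if_false, ite_true, ite_false, add_zero, zero_add,
      mul_zero, if_pos, if_neg, not_false_iff] at hgd ⊢ <;> nlinarith

theorem stmt6 (dbar : ℕ) (hdbar : 1 ≤ dbar) (h b : ℝ) (hh : 0 < h) (hb : 0 < b)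
    (β : ℝ) (hβ : β = b / (h + b)) (f : ℕ → ℝ) (hf : IsDist dbar f)
    (hα : cdfm1 f (ystar dbar β f) < β) (hγ : β < cdf f (ystar dbar β f))
    (κ : ℝ) (hκpos : 0 < κ)
    (hκα : cdfm1 f (ystar dbar β f) = 0 ∨ κ ≤ klB β (cdfm1 f (ystar dbar β f)))
    (hκγ : cdf f (ystar dbar β f) = 1 ∨ κ ≤ klB β (cdf f (ystar dbar β f)))
    (τ : ℕ) (hτ : 1 ≤ τ)
    (hτ1 : ∀ t : ℕ, τ + 1 ≤ t → (t : ℝ) ^ 2 * Real.exp (-κ * ((t : ℝ) - 1)) < 1 / 2)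
    (hτ2 : ∀ t : ℕ, τ + 1 ≤ t →
      ((t : ℝ) + 1) ^ 2 * Real.exp (-κ * (t : ℝ))
        < Real.exp (-κ / 2) * ((t : ℝ) ^ 2 * Real.exp (-κ * ((t : ℝ) - 1))))
    (T : ℕ) (hT : 1 ≤ T) :
    regretT1 h b dbar β f T
      ≤ (h * (dbar : ℝ) + b * (dbar : ℝ)) * ((τ : ℝ) + 1 / (2 * (1 - Real.exp (-κ / 2)))) := by
  have hhb : (0:ℝ) < h + b := by linarith
  have hβ0 : 0 < β := by rw [hβ]; positivity
  have hβ1 : β < 1 := by rw [hβ, div_lt_one hhb]; linarith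
  have hcdfd : cdf f dbar = 1 := hf.2.2
  have hβd : β ≤ cdf f dbar := by rw [hcdfd]; linarith
  have hydbar : ystar dbar β f ≤ dbar := (ystar_mem dbar β f hβd).1
  set C : ℝ := h * (dbar : ℝ) + b * (dbar : ℝ) with hCdef
  have hdbar1 : (1:ℝ) ≤ (dbar : ℝ) := by exact_mod_cast hdbar
  have hC0 : 0 < C := by nlinarith
  have hQse := Qstar_eq h b hh hb dbar f hf β hβ
  have hQs0 := Qstar_nonneg h b hh.le hb.le dbar f hf.1
  set r : ℝ := Real.exp (-κ / 2) with hrdef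
  have hr0 : 0 < r := Real.exp_pos _
  have hr1 : r < 1 := by
    rw [hrdef, ← Real.exp_zero]
    exact Real.exp_lt_exp.mpr (by linarith)
  have h1r : (0:ℝ) < 1 - r := by linarith
  -- per-term bounds
  have termA : ∀ n : ℕ,
      expec dbar n f (fun d => Q h b dbar f (yhat dbar β n d)) - Qstar h b dbar f ≤ C := by
    intro n
    have h1 : expec dbar n f (fun d => Q h b dbar f (yhat dbar β n d))
        ≤ expec dbar n f (fun _ => C) := by
      refine expec_mono dbar n f hf.1 _ _ fun d => ?_
      exact Q_le h b hh.le hb.le dbar f hf _ (yhat_le dbar β n _)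
    rw [expec_const dbar n f hf C] at h1
    linarith
  have termB : ∀ n : ℕ, 1 ≤ n →
      expec dbar n f (fun d => Q h b dbar f (yhat dbar β n d)) - Qstar h b dbar f
        ≤ 2 * C * Real.exp (-κ * n) := by
    intro n hn
    have hsub := expec_sub_const dbar n f hf (Qstar h b dbar f)
      (fun d => Q h b dbar f (yhat dbar β n d))
    have point : ∀ d : Fin n → Fin (dbar + 1),
        Q h b dbar f (yhat dbar β n (fun s => (d s : ℕ))) - Qstar h b dbar f
          ≤ (if (β * n ≤ ∑ s : Fin n, if (d s : ℕ) < ystar dbar β f then (1:ℝ) else 0)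
              then C else 0)
            + (if ((∑ s : Fin n, if (d s : ℕ) ≤ ystar dbar β f then (1:ℝ) else 0) ≤ β * n)
              then C else 0) := by
      intro d
      have hQy : Q h b dbar f (yhat dbar β n (fun s => (d s : ℕ))) ≤ C :=
        Q_le h b hh.le hb.le dbar f hf _ (yhat_le dbar β n _)
      by_cases hA : β * n ≤ ∑ s : Fin n, if (d s : ℕ) < ystar dbar β f then (1:ℝ) else 0
      · rw [if_pos hA]
        split_ifs <;> linarith
      · by_cases hB : (∑ s : Fin n, if (d s : ℕ) ≤ ystar dbar β f then (1:ℝ) else 0) ≤ β * n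
        · rw [if_neg hA, if_pos hB]
          linarith
        · rw [if_neg hA, if_neg hB]
          have heq : yhat dbar β n (fun s => (d s : ℕ)) = ystar dbar β f :=
            yhat_eq dbar β f hβd n hn (fun s => (d s : ℕ)) (not_le.mp hA) (not_le.mp hB).le
          rw [heq, ← hQse]
          simp
    have h1 : expec dbar n f
        (fun d => Q h b dbar f (yhat dbar β n d) - Qstar h b dbar f)
        ≤ C * prob dbar n f
            (fun d => β * n ≤ ∑ s : Fin n, if d s < ystar dbar β f then (1:ℝ) else 0)
          + C * prob dbar n f
            (fun d => (∑ s : Fin n, if d s ≤ ystar dbar β f then (1:ℝ) else 0) ≤ β * n) :=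
      expec_le_prob2 dbar n f hf.1 C _ _ _ point
    rw [hsub] at h1
    have pA := prob_up dbar β f hf hβ0 hβ1 hydbar hα κ hκpos hκα n hn
    have pB := prob_down dbar β f hf hβ0 hβ1 hydbar hγ κ hκpos hκγ n hn
    have cA := mul_le_mul_of_nonneg_left pA hC0.le
    have cB := mul_le_mul_of_nonneg_left pB hC0.le
    linarith
  -- geometric decay
  set aR : ℕ → ℝ := fun t => ((t:ℝ)) ^ 2 * Real.exp (-κ * ((t:ℝ) - 1)) with haRdef
  have haR0 : ∀ t, 0 ≤ aR t := fun t => by positivity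
  have haRsucc : ∀ t : ℕ, aR (t + 1) = (((t:ℝ)) + 1) ^ 2 * Real.exp (-κ * (t:ℝ)) := by
    intro t
    simp only [haRdef]
    push_cast
    ring_nf
  have claim : ∀ j : ℕ, aR (τ + 1 + j) ≤ r ^ j * (1 / 2) := by
    intro j
    induction j with
    | zero =>
      rw [pow_zero, one_mul]
      exact (hτ1 (τ + 1) (le_refl _)).le
    | succ j ih =>
      have h2 := hτ2 (τ + 1 + j) (by omega)
      have he : τ + 1 + (j + 1) = (τ + 1 + j) + 1 := by omega
      rw [he, haRsucc]
      have hle : ((((τ + 1 + j : ℕ)):ℝ) + 1) ^ 2 * Real.exp (-κ * ((τ + 1 + j : ℕ):ℝ))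
          ≤ r * aR (τ + 1 + j) := h2.le
      calc ((((τ + 1 + j : ℕ)):ℝ) + 1) ^ 2 * Real.exp (-κ * ((τ + 1 + j : ℕ):ℝ))
          ≤ r * aR (τ + 1 + j) := hle
        _ ≤ r * (r ^ j * (1 / 2)) := mul_le_mul_of_nonneg_left ih hr0.le
        _ = r ^ (j + 1) * (1 / 2) := by ring
  -- rewrite regret as a sum of per-period excesses
  have hreg : regretT1 h b dbar β f T
      = ∑ t ∈ Finset.range T,
          (expec dbar t f (fun d => Q h b dbar f (yhat dbar β t d)) - Qstar h b dbar f) := by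
    unfold regretT1
    rw [Finset.sum_sub_distrib, Finset.sum_const, Finset.card_range, nsmul_eq_mul]
  set B : ℕ → ℝ := fun t => if t < τ then C else C * aR (t + 1) with hBdef
  have hB0 : ∀ t, 0 ≤ B t := by
    intro t
    simp only [hBdef]
    split_ifs
    · exact hC0.le
    · exact mul_nonneg hC0.le (haR0 _)
  have hstep : ∀ t ∈ Finset.range T,
      expec dbar t f (fun d => Q h b dbar f (yhat dbar β t d)) - Qstar h b dbar f ≤ B t := by
    intro t _
    simp only [hBdef]
    split_ifs with ht
    · exact termA t
    · push_neg at ht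
      have hn1 : 1 ≤ t := le_trans hτ ht
      have ht1 : (1:ℝ) ≤ (t:ℝ) := by exact_mod_cast hn1
      refine le_trans (termB t hn1) ?_
      rw [haRsucc]
      have hexp : (0:ℝ) < Real.exp (-κ * (t:ℝ)) := Real.exp_pos _
      have h4 : (4:ℝ) ≤ ((t:ℝ) + 1) ^ 2 := by nlinarith
      nlinarith [h4, mul_nonneg hC0.le hexp.le,
        mul_le_mul_of_nonneg_left h4 (mul_nonneg hC0.le hexp.le)]
  set M : ℕ := max T τ with hMdef
  have hsum1 : ∑ t ∈ Finset.range T, B t ≤ ∑ t ∈ Finset.range M, B t :=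
    Finset.sum_le_sum_of_subset_of_nonneg
      (Finset.range_subset_range.mpr (le_max_left T τ)) (fun t _ _ => hB0 t)
  have hsplit : ∑ t ∈ Finset.range M, B t
      = (∑ t ∈ Finset.range τ, B t) + ∑ t ∈ Finset.Ico τ M, B t := by
    rw [Finset.range_eq_Ico, Finset.range_eq_Ico,
      Finset.sum_Ico_consecutive B (Nat.zero_le τ) (le_max_right T τ)]
  have hfirst : (∑ t ∈ Finset.range τ, B t) = (τ:ℝ) * C := by
    rw [Finset.sum_congr rfl fun t ht => ?_]
    · rw [Finset.sum_const, Finset.card_range, nsmul_eq_mul]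
    · exact if_pos (Finset.mem_range.mp ht)
  have hsecond : (∑ t ∈ Finset.Ico τ M, B t) ≤ C / 2 * (1 / (1 - r)) := by
    rw [Finset.sum_Ico_eq_sum_range]
    have hterm : ∀ j ∈ Finset.range (M - τ), B (τ + j) ≤ C * (r ^ j * (1 / 2)) := by
      intro j _
      simp only [hBdef]
      rw [if_neg (by omega)]
      have : τ + j + 1 = τ + 1 + j := by omega
      rw [this]
      exact mul_le_mul_of_nonneg_left (claim j) hC0.le
    refine le_trans (Finset.sum_le_sum hterm) ?_
    have : ∑ j ∈ Finset.range (M - τ), C * (r ^ j * (1 / 2))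
        = C / 2 * ∑ j ∈ Finset.range (M - τ), r ^ j := by
      rw [Finset.mul_sum]
      exact Finset.sum_congr rfl fun j _ => by ring
    rw [this]
    refine mul_le_mul_of_nonneg_left ?_ (by positivity)
    have hgeom := geom_sum_eq hr1.ne (M - τ)
    rw [hgeom]
    have he : (r ^ (M - τ) - 1) / (r - 1) = (1 - r ^ (M - τ)) / (1 - r) := by
      rw [div_eq_div_iff (by linarith) h1r.ne']
      ring
    rw [he]
    have hpw : 0 ≤ r ^ (M - τ) := pow_nonneg hr0.le _
    rw [div_le_div_iff₀ h1r h1r]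
    nlinarith
  have hfinal : regretT1 h b dbar β f T ≤ (τ:ℝ) * C + C / 2 * (1 / (1 - r)) := by
    rw [hreg]
    calc ∑ t ∈ Finset.range T,
          (expec dbar t f (fun d => Q h b dbar f (yhat dbar β t d)) - Qstar h b dbar f)
        ≤ ∑ t ∈ Finset.range T, B t := Finset.sum_le_sum hstep
      _ ≤ ∑ t ∈ Finset.range M, B t := hsum1
      _ = (∑ t ∈ Finset.range τ, B t) + ∑ t ∈ Finset.Ico τ M, B t := hsplit
      _ ≤ (τ:ℝ) * C + C / 2 * (1 / (1 - r)) := by rw [hfirst]; linarith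
  refine le_trans hfinal ?_
  have heq : C * ((τ : ℝ) + 1 / (2 * (1 - r))) = (τ:ℝ) * C + C / 2 * (1 / (1 - r)) := by
    field_simp
  rw [heq]
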